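/- (Hurwitz genus bound for graphs) If a group Γ acts harmonically on a graph G of genus g ≥ 2, then |Γ| ≤ 6(g − 1). -/

import Mathlib

open scoped Classical

/-- A finite connected multigraph without loop edges. -/
structure Multigraph where
  V : Type
  E : Type
  [fintypeV : Fintype V]
  [fintypeE : Fintype E]
  ends : E → Sym2 V
  loopless : ∀ e : E, ¬ (ends e).IsDiag
  connected : (SimpleGraph.fromRel fun x y : V => ∃ e : E, ends e = s(x, y)).Connected

attribute [instance] Multigraph.fintypeV Multigraph.fintypeE

namespace Multigraph

/-- The genus (first Betti number, cyclomatic number) of a multigraph. -/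
def genus (G : Multigraph) : ℤ :=
  (Fintype.card G.E : ℤ) - (Fintype.card G.V : ℤ) + 1

/-- A cycle in a multigraph, given as a nonempty set of edges such that every vertex is
incident to either 0 or 2 of its edges. -/
def IsCycleSet (G : Multigraph) (C : Set G.E) : Prop :=
  C.Nonempty ∧ ∀ x : G.V,
    Nat.card {e : G.E // e ∈ C ∧ x ∈ G.ends e} = 0 ∨
    Nat.card {e : G.E // e ∈ C ∧ x ∈ G.ends e} = 2

end Multigraph

/-- A morphism of multigraphs: vertices go to vertices, and each edge goes either to an
edge joining the images of its endpoints, or to the common image of its endpoints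
(in which case the edge is *vertical*). -/
structure Morphism (G G' : Multigraph) where
  vmap : G.V → G'.V
  emap : G.E → G'.E ⊕ G'.V
  compat : ∀ e : G.E,
    (∀ e', emap e = Sum.inl e' → G'.ends e' = (G.ends e).map vmap) ∧
    (∀ v, emap e = Sum.inr v → (G.ends e).map vmap = Sym2.diag v)

namespace Morphism

/-- A morphism is harmonic if for every vertex `x`, the number of edges incident to `x`
mapping to a given edge `e'` incident to `φ(x)` is independent of the choice of `e'`. -/
def Harmonic {G G' : Multigraph} (φ : Morphism G G') : Prop :=
  ∀ (x : G.V) (e₁ e₂ : G'.E), φ.vmap x ∈ G'.ends e₁ → φ.vmap x ∈ G'.ends e₂ →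
    Nat.card {e : G.E // x ∈ G.ends e ∧ φ.emap e = Sum.inl e₁} =
    Nat.card {e : G.E // x ∈ G.ends e ∧ φ.emap e = Sum.inl e₂}

/-- A morphism is nonconstant if its image is not a single vertex. -/
def Nonconstant {G G' : Multigraph} (φ : Morphism G G') : Prop :=
  ∃ x y : G.V, φ.vmap x ≠ φ.vmap y

/-- Composition of morphisms of multigraphs. -/
def comp {G₁ G₂ G₃ : Multigraph} (ψ : Morphism G₂ G₃) (φ : Morphism G₁ G₂) :
    Morphism G₁ G₃ where
  vmap := ψ.vmap ∘ φ.vmap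
  emap e := Sum.elim ψ.emap (fun v => Sum.inr (ψ.vmap v)) (φ.emap e)
  compat e := by
    constructor
    · intro e'' h
      rcases hφ : φ.emap e with e' | v
      · simp only [hφ, Sum.elim_inl] at h
        have h1 := (φ.compat e).1 e' hφ
        have h2 := (ψ.compat e').1 e'' h
        rw [h2, h1, Sym2.map_map]
      · simp only [hφ, Sum.elim_inr] at h
        simp at h
    · intro v h
      rcases hφ : φ.emap e with e' | v₀
      · simp only [hφ, Sum.elim_inl] at h
        have h1 := (φ.compat e).1 e' hφ
        have h2 := (ψ.compat e').2 v h
        rw [← Sym2.map_map, ← h1]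
        exact h2
      · simp only [hφ, Sum.elim_inr, Sum.inr.injEq] at h
        have h1 := (φ.compat e).2 v₀ hφ
        subst h
        rw [← Sym2.map_map, h1]
        rfl
end Morphism

/-- A group of automorphisms of a multigraph `G` (a faithful action of `Γ` on `G` by
automorphisms, i.e. a subgroup of `Aut(G)`). -/
structure GraphAction (Γ : Type) [Group Γ] (G : Multigraph) where
  actV : Γ →* Equiv.Perm G.V
  actE : Γ →* Equiv.Perm G.E
  ends_map : ∀ (γ : Γ) (e : G.E), G.ends (actE γ e) = (G.ends e).map (actV γ)
  faithful : ∀ γ : Γ, (∀ x : G.V, actV γ x = x) → (∀ e : G.E, actE γ e = e) → γ = 1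

namespace GraphAction

variable {Γ : Type} [Group Γ] {G : Multigraph}

/-- Two vertices lie in the same `Δ`-orbit. -/
def vrel (A : GraphAction Γ G) (Δ : Subgroup Γ) (x y : G.V) : Prop :=
  ∃ δ ∈ Δ, A.actV δ x = y

/-- Two edges lie in the same `Δ`-orbit. -/
def erel (A : GraphAction Γ G) (Δ : Subgroup Γ) (e f : G.E) : Prop :=
  ∃ δ ∈ Δ, A.actE δ e = f

/-- The setoid of `Δ`-orbits of vertices. -/
def vSetoid (A : GraphAction Γ G) (Δ : Subgroup Γ) : Setoid G.V where
  r := A.vrel Δ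
  iseqv := by
    constructor
    · intro x; exact ⟨1, Δ.one_mem, by simp⟩
    · rintro x y ⟨δ, hδ, h⟩
      refine ⟨δ⁻¹, Δ.inv_mem hδ, ?_⟩
      rw [map_inv, ← h]
      exact Equiv.symm_apply_apply _ _
    · rintro x y z ⟨δ₁, h1, e1⟩ ⟨δ₂, h2, e2⟩
      refine ⟨δ₂ * δ₁, Δ.mul_mem h2 h1, ?_⟩
      rw [map_mul]
      simp [Equiv.Perm.mul_apply, e1, e2]

/-- The setoid of `Δ`-orbits of edges. -/
def eSetoid (A : GraphAction Γ G) (Δ : Subgroup Γ) : Setoid G.E where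
  r := A.erel Δ
  iseqv := by
    constructor
    · intro e; exact ⟨1, Δ.one_mem, by simp⟩
    · rintro e f ⟨δ, hδ, h⟩
      refine ⟨δ⁻¹, Δ.inv_mem hδ, ?_⟩
      rw [map_inv, ← h]
      exact Equiv.symm_apply_apply _ _
    · rintro e f k ⟨δ₁, h1, e1⟩ ⟨δ₂, h2, e2⟩
      refine ⟨δ₂ * δ₁, Δ.mul_mem h2 h1, ?_⟩
      rw [map_mul]
      simp [Equiv.Perm.mul_apply, e1, e2]

/-- An edge is `Δ`-vertical if its two endpoints lie in the same `Δ`-orbit (so it is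
contracted by the quotient morphism `G → G/Δ`). -/
def Vertical (A : GraphAction Γ G) (Δ : Subgroup Γ) (e : G.E) : Prop :=
  ∃ x y : G.V, G.ends e = s(x, y) ∧ A.vrel Δ x y

/-- The vertex set of the quotient graph `G/Δ`: the `Δ`-orbits of vertices. -/
abbrev quotV (A : GraphAction Γ G) (Δ : Subgroup Γ) : Type :=
  Quotient (A.vSetoid Δ)

/-- The edge set of the quotient graph `G/Δ`: the `Δ`-orbits of non-vertical edges. -/
abbrev quotE (A : GraphAction Γ G) (Δ : Subgroup Γ) : Type :=
  Quotient ((A.eSetoid Δ).comap (Subtype.val : {e : G.E // ¬ A.Vertical Δ e} → G.E))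

/-- The genus of the quotient graph `G/Δ`. -/
noncomputable def quotGenus (A : GraphAction Γ G) (Δ : Subgroup Γ) : ℤ :=
  (Nat.card (A.quotE Δ) : ℤ) - (Nat.card (A.quotV Δ) : ℤ) + 1

/-- The order of the stabilizer `Δ_x` of a vertex `x`. -/
noncomputable def stabOrder (A : GraphAction Γ G) (Δ : Subgroup Γ) (x : G.V) : ℕ :=
  Nat.card {γ : Γ // γ ∈ Δ ∧ A.actV γ x = x}

/-- The vertical multiplicity of a vertex `x`: the number of `Δ`-vertical edges
incident to `x`. -/
noncomputable def vertMult (A : GraphAction Γ G) (Δ : Subgroup Γ) (x : G.V) : ℕ :=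
  Nat.card {e : G.E // x ∈ G.ends e ∧ A.Vertical Δ e}

/-- `r_y = |Δ_x|` for a vertex `y` of the quotient `G/Δ` and any `x` in the fiber over `y`. -/
noncomputable def r (A : GraphAction Γ G) (Δ : Subgroup Γ) (y : A.quotV Δ) : ℕ :=
  A.stabOrder Δ (Quotient.out y)

/-- `w_y = v(x)/|Δ_x|` for a vertex `y` of the quotient `G/Δ` and any `x` in the fiber. -/
noncomputable def w (A : GraphAction Γ G) (Δ : Subgroup Γ) (y : A.quotV Δ) : ℕ :=
  A.vertMult Δ (Quotient.out y) / A.r Δ y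

/-- The ramification number `R = Σ_y [2(1 - 1/r_y) + w_y]` of the quotient map `G → G/Δ`. -/
noncomputable def ram (A : GraphAction Γ G) (Δ : Subgroup Γ) : ℚ :=
  ∑ᶠ y : A.quotV Δ, (2 * (1 - 1 / (A.r Δ y : ℚ)) + (A.w Δ y : ℚ))

/-- A vertex `y` of the quotient `G/Δ` is a branch point if `2(1 - 1/r_y) + w_y > 0`. -/
def IsBranch (A : GraphAction Γ G) (Δ : Subgroup Γ) (y : A.quotV Δ) : Prop :=
  0 < 2 * (1 - 1 / (A.r Δ y : ℚ)) + (A.w Δ y : ℚ)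

/-- The quotient morphism `φ_Δ : G → G/Δ` is harmonic: for every vertex `x` of `G` and
every pair of quotient edges incident to the image of `x`, the numbers of preimages
incident to `x` agree. -/
def QuotHarmonic (A : GraphAction Γ G) (Δ : Subgroup Γ) : Prop :=
  ∀ (x : G.V) (e₁ e₂ : G.E), ¬ A.Vertical Δ e₁ → ¬ A.Vertical Δ e₂ →
    (∃ v ∈ G.ends e₁, A.vrel Δ x v) → (∃ v ∈ G.ends e₂, A.vrel Δ x v) →
    Nat.card {e : G.E // x ∈ G.ends e ∧ A.erel Δ e e₁} =
    Nat.card {e : G.E // x ∈ G.ends e ∧ A.erel Δ e e₂}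

/-- The quotient morphism `φ_Δ : G → G/Δ` is non-degenerate: no neighborhood `x(1)` is
contracted to a vertex, i.e. every vertex has a neighbor outside its `Δ`-orbit. -/
def QuotNondeg (A : GraphAction Γ G) (Δ : Subgroup Γ) : Prop :=
  ∀ x : G.V, ∃ e : G.E, x ∈ G.ends e ∧ ∃ y ∈ G.ends e, ¬ A.vrel Δ x y

/-- `Γ` acts harmonically on `G` if for every subgroup `Δ ≤ Γ` the quotient morphism
`φ_Δ : G → G/Δ` is harmonic and non-degenerate. -/
def ActsHarmonically (A : GraphAction Γ G) : Prop :=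
  ∀ Δ : Subgroup Γ, A.QuotHarmonic Δ ∧ A.QuotNondeg Δ

/-- The quotient map `G → G/Δ` is horizontally unramified: all vertex stabilizers in `Δ`
are trivial. -/
def HorizUnramified (A : GraphAction Γ G) (Δ : Subgroup Γ) : Prop :=
  ∀ (x : G.V) (γ : Γ), γ ∈ Δ → A.actV γ x = x → γ = 1

end GraphAction

/-- `M g` is the maximal order of a group acting harmonically on a graph of genus `g`. -/
noncomputable def M (g : ℕ) : ℕ :=
  sSup {n : ℕ | ∃ (Γ : Type) (i : Group Γ) (G : Multigraph) (A : @GraphAction Γ i G),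
    @GraphAction.ActsHarmonically Γ i G A ∧ G.genus = (g : ℤ) ∧ Nat.card Γ = n}

/-!
An element of `Γ` fixing a vertex `x` and an edge at `x` is trivial: harmonicity of
`G → G/⟨γ⟩` at `x` makes every edge at `x` the only one of its `⟨γ⟩`-orbit there, so `γ` fixes
the whole star of `x`, and connectivity spreads this over `G`. Hence `Γ` acts freely on the
non-vertical edges, and the stabilizer `Γ_x` acts freely on the vertical edges at `x`. Counting
orbits gives the Riemann–Hurwitz formula `g - 1 = |Γ| (g' - 1 + R/2)`, where `g' ≥ 0` is the
genus of the connected quotient `G/Γ` and `R = Σ_y (2 (1 - 1/r_y) + w_y)`. As for Riemann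
surfaces, the local terms of `R` are integers or lie in `[4/3, 2) ∪ [7/3, ∞)`, which forces the
positive number `g' - 1 + R/2` to be at least `1/6`.
-/

namespace MulAction

variable {H X : Type*} [Group H] [Finite H] [MulAction H X] [Fintype X]

theorem sum_eq_sum_quotient_card_div_card_stabilizer (s : Setoid X) [Fintype (Quotient s)]
    (hs : ∀ x y, s x y ↔ ∃ h : H, h • x = y) (f : X → ℚ) (hf : ∀ (h : H) x, f (h • x) = f x) :
    ∑ x, f x = ∑ ω : Quotient s,
      (Nat.card H / Nat.card (stabilizer H ω.out) : ℚ) * f ω.out := by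
  rw [← Fintype.sum_fiberwise (Quotient.mk s) f]
  refine Fintype.sum_congr _ _ fun ω => ?_
  have hfiber : {x // Quotient.mk s x = ω} ≃ orbit H ω.out :=
    Equiv.subtypeEquivRight fun x => by
      rw [← Quotient.out_eq ω, Quotient.eq, Quotient.out_eq, mem_orbit_iff, s.comm', hs]
  have horbit : (Nat.card (orbit H ω.out) : ℚ) * Nat.card (stabilizer H ω.out) = Nat.card H := by
    rw [← Nat.cast_mul, ← Nat.card_prod, Nat.card_congr (orbitProdStabilizerEquivGroup H _)]
  have hstab : (Nat.card (stabilizer H ω.out) : ℚ) ≠ 0 := by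
    exact_mod_cast Nat.card_pos.ne'
  calc ∑ x : {x // Quotient.mk s x = ω}, f x
      = ∑ _x : {x // Quotient.mk s x = ω}, f ω.out :=
        Fintype.sum_congr _ _ fun x => by
          obtain ⟨h, hx⟩ := (hs _ _).mp (Quotient.exact (x.2.trans (Quotient.out_eq ω).symm))
          rw [← hx, hf]
    _ = _ := by
      rw [Finset.sum_const, Finset.card_univ, nsmul_eq_mul, Fintype.card_eq_nat_card,
        Nat.card_congr hfiber, ← horbit, mul_div_cancel_right₀ _ hstab]

theorem card_eq_card_quotient_mul_card_of_free (s : Setoid X)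
    (hs : ∀ x y, s x y ↔ ∃ h : H, h • x = y) (hfree : ∀ (h : H) (x : X), h • x = x → h = 1) :
    Nat.card X = Nat.card (Quotient s) * Nat.card H := by
  have := Fintype.ofFinite (Quotient s)
  have hstab : ∀ x : X, Nat.card (stabilizer H x) = 1 := fun x =>
    Nat.card_eq_one_iff_unique.mpr ⟨⟨fun a b => Subtype.ext <|
      (hfree _ _ a.2).trans (hfree _ _ b.2).symm⟩, inferInstance⟩
  have := sum_eq_sum_quotient_card_div_card_stabilizer s hs (fun _ => (1 : ℚ)) fun _ _ => rfl
  simp only [hstab, Finset.sum_const, Finset.card_univ, nsmul_eq_mul, Nat.cast_one, div_one,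
    mul_one, ← Fintype.card_eq_nat_card] at this ⊢
  exact_mod_cast this

end MulAction

namespace Multigraph

variable (G : Multigraph)

theorem exists_ends_eq (e : G.E) : ∃ x y, G.ends e = s(x, y) :=
  Sym2.ind (f := fun z => ∃ x y, z = s(x, y)) (fun x y => ⟨x, y, rfl⟩) (G.ends e)

theorem exists_ends_eq_of_adj {x y : G.V}
    (h : (SimpleGraph.fromRel fun x y : G.V => ∃ e : G.E, G.ends e = s(x, y)).Adj x y) :
    ∃ e, G.ends e = s(x, y) := by
  obtain ⟨-, ⟨e, he⟩ | ⟨e, he⟩⟩ := h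
  exacts [⟨e, he⟩, ⟨e, he.trans Sym2.eq_swap⟩]

theorem forall_of_edge_step {P : G.V → Prop}
    (hstep : ∀ e x y, G.ends e = s(x, y) → P x → P y) {x : G.V} (hx : P x) (y : G.V) : P y := by
  have hreach := SimpleGraph.reachable_iff_reflTransGen _ _ |>.mp (G.connected.preconnected x y)
  induction hreach with
  | refl => exact hx
  | tail _ hadj ih =>
    obtain ⟨e, he⟩ := G.exists_ends_eq_of_adj hadj
    exact hstep e _ _ he ih

theorem card_filter_mem_ends (e : G.E) : (Finset.univ.filter (· ∈ G.ends e)).card = 2 := by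
  rw [← Sym2.card_toFinset_of_not_isDiag _ (G.loopless e)]
  congr 1
  ext x
  simp

theorem sum_card_incident_eq_two_mul (p : G.E → Prop) :
    ∑ x, Nat.card {e // x ∈ G.ends e ∧ p e} = 2 * Nat.card {e // p e} := by
  have := Finset.sum_card_bipartiteAbove_eq_sum_card_bipartiteBelow (s := Finset.univ)
    (t := Finset.univ.filter p) (fun x e => x ∈ G.ends e)
  simp only [Finset.bipartiteAbove, Finset.bipartiteBelow, Finset.filter_filter,
    card_filter_mem_ends, Finset.sum_const, smul_eq_mul] at this
  simp only [Nat.card_eq_fintype_card, Fintype.card_subtype, and_comm (a := _ ∈ _), this,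
    mul_comm]

end Multigraph

def AvoidsHurwitzGaps (q : ℚ) : Prop :=
  (q = 0 ∨ 1 ≤ q) ∧ (q ≤ 1 ∨ 4 / 3 ≤ q) ∧ (q ≤ 2 ∨ 7 / 3 ≤ q)

namespace AvoidsHurwitzGaps

theorem zero : AvoidsHurwitzGaps 0 := by norm_num [AvoidsHurwitzGaps]

theorem add {a b : ℚ} (ha : AvoidsHurwitzGaps a) (hb : AvoidsHurwitzGaps b) :
    AvoidsHurwitzGaps (a + b) := by
  rcases ha.1 with ha₁ | ha₁
  · rwa [ha₁, zero_add]
  rcases hb.1 with hb₁ | hb₁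
  · rwa [hb₁, add_zero]
  refine ⟨.inr (by linarith), .inr (by linarith), ?_⟩
  rcases ha.2.1 with ha₂ | ha₂ <;> rcases hb.2.1 with hb₂ | hb₂
  · exact .inl (by linarith)
  all_goals exact .inr (by linarith)

theorem of_mem_Icc {q : ℚ} (h₁ : 4 / 3 ≤ q) (h₂ : q ≤ 2) : AvoidsHurwitzGaps q :=
  ⟨.inr (by linarith), .inr h₁, .inl h₂⟩

theorem of_le {q : ℚ} (h : 7 / 3 ≤ q) : AvoidsHurwitzGaps q :=
  ⟨.inr (by linarith), .inr (by linarith), .inr h⟩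

theorem natCast (n : ℕ) : AvoidsHurwitzGaps n := by
  rcases n with _ | _ | _ | n
  · exact zero
  · norm_num [AvoidsHurwitzGaps]
  · norm_num [AvoidsHurwitzGaps]
  · have : (3 : ℚ) ≤ (n + 3 : ℕ) := by exact_mod_cast Nat.le_add_left 3 n
    exact of_le (by linarith)

theorem local_term (r w : ℕ) : AvoidsHurwitzGaps (2 * (1 - 1 / r) + w) := by
  rcases le_or_gt r 2 with hr | hr
  · interval_cases r
    -- `1 / 0 = 0`, so the junk case `r = 0` gives `2 + w`
    · simpa [add_comm] using natCast (w + 2)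
    · simpa using natCast w
    · convert natCast (w + 1) using 1; push_cast; ring
  have hr' : (3 : ℚ) ≤ r := by exact_mod_cast hr
  have hinv : 1 / (r : ℚ) ≤ 1 / 3 := one_div_le_one_div_of_le (by norm_num) hr'
  have hinv_pos : 0 < 1 / (r : ℚ) := by positivity
  rcases Nat.eq_zero_or_pos w with rfl | hw
  · exact of_mem_Icc (by push_cast; linarith) (by push_cast; linarith)
  · have hw' : (1 : ℚ) ≤ w := by exact_mod_cast hw
    exact of_le (by linarith)

theorem sum {ι : Type*} (s : Finset ι) {f : ι → ℚ} (hf : ∀ i ∈ s, AvoidsHurwitzGaps (f i)) :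
    AvoidsHurwitzGaps (∑ i ∈ s, f i) :=
  Finset.sum_induction f _ (fun _ _ => add) zero hf

theorem one_sixth_le {h : ℤ} (hh : 0 ≤ h) {q : ℚ} (hq : AvoidsHurwitzGaps q)
    (hpos : 0 < h - 1 + q / 2) : 1 / 6 ≤ h - 1 + q / 2 := by
  have hq₀ : 0 ≤ q := hq.1.elim (fun h => h.ge) (fun h => by linarith)
  rcases (show h = 0 ∨ h = 1 ∨ 2 ≤ h by omega) with rfl | rfl | h₂
  · rcases hq.2.2 with hq₂ | hq₂
    · push_cast at hpos; linarith
    · push_cast; linarith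
  · rcases hq.1 with hq₁ | hq₁
    · push_cast at hpos; linarith
    · push_cast; linarith
  · have : (2 : ℚ) ≤ h := by exact_mod_cast h₂
    linarith

end AvoidsHurwitzGaps

namespace GraphAction

variable {Γ : Type} [Group Γ] {G : Multigraph}

protected theorem finite (A : GraphAction Γ G) : Finite Γ :=
  Finite.of_injective _ <| (injective_iff_map_eq_one (A.actV.prod A.actE)).mpr fun γ h =>
    A.faithful γ (fun x => congr($(congrArg Prod.fst h) x))
      (fun e => congr($(congrArg Prod.snd h) e))

abbrev vertexAction (A : GraphAction Γ G) : MulAction Γ G.V := MulAction.compHom G.V A.actV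

abbrev edgeAction (A : GraphAction Γ G) : MulAction Γ G.E := MulAction.compHom G.E A.actE

section

variable {A : GraphAction Γ G} {Δ : Subgroup Γ}

theorem vrel_iff {x y : G.V} : A.vrel Δ x y ↔ ∃ δ : Δ, A.actV δ x = y :=
  ⟨fun ⟨δ, hδ, h⟩ => ⟨⟨δ, hδ⟩, h⟩, fun ⟨δ, h⟩ => ⟨δ, δ.2, h⟩⟩

theorem erel_iff {e f : G.E} : A.erel Δ e f ↔ ∃ δ : Δ, A.actE δ e = f :=
  ⟨fun ⟨δ, hδ, h⟩ => ⟨⟨δ, hδ⟩, h⟩, fun ⟨δ, h⟩ => ⟨δ, δ.2, h⟩⟩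

theorem mk_actV {γ : Γ} (hγ : γ ∈ Δ) (x : G.V) :
    (Quotient.mk _ (A.actV γ x) : A.quotV Δ) = Quotient.mk _ x :=
  Quotient.sound ((A.vSetoid Δ).symm ⟨γ, hγ, rfl⟩)

theorem mk_eq_mk_iff {x y : G.V} :
    (Quotient.mk _ x : A.quotV Δ) = Quotient.mk _ y ↔ A.vrel Δ x y :=
  Quotient.eq

theorem vrel_actV_iff {γ : Γ} (hγ : γ ∈ Δ) {x y : G.V} :
    A.vrel Δ (A.actV γ x) (A.actV γ y) ↔ A.vrel Δ x y := by
  rw [← mk_eq_mk_iff, ← mk_eq_mk_iff, mk_actV hγ, mk_actV hγ]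

theorem vertical_iff {e : G.E} {x y : G.V} (he : G.ends e = s(x, y)) :
    A.Vertical Δ e ↔ A.vrel Δ x y := by
  refine ⟨fun ⟨a, b, hab, h⟩ => ?_, fun h => ⟨x, y, he, h⟩⟩
  rcases Sym2.eq_iff.mp (hab.symm.trans he) with ⟨rfl, rfl⟩ | ⟨rfl, rfl⟩
  exacts [h, (A.vSetoid Δ).symm h]

theorem mem_ends_actE_iff (γ : Γ) {x : G.V} {e : G.E} :
    A.actV γ x ∈ G.ends (A.actE γ e) ↔ x ∈ G.ends e := by
  rw [A.ends_map, Sym2.mem_map]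
  exact ⟨fun ⟨a, ha, h⟩ => (A.actV γ).injective h ▸ ha, fun h => ⟨x, h, rfl⟩⟩

theorem vertical_actE_iff {γ : Γ} (hγ : γ ∈ Δ) {e : G.E} :
    A.Vertical Δ (A.actE γ e) ↔ A.Vertical Δ e := by
  obtain ⟨x, y, he⟩ := G.exists_ends_eq e
  rw [vertical_iff he, vertical_iff (by rw [A.ends_map, he, Sym2.map_mk]), vrel_actV_iff hγ]

theorem not_vertical_of_forall_fixes {x : G.V} (hx : ∀ δ ∈ Δ, A.actV δ x = x) {e : G.E}
    (he : x ∈ G.ends e) : ¬ A.Vertical Δ e := by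
  obtain ⟨y, hy⟩ := Sym2.mem_iff_exists.mp he
  rintro hv
  obtain ⟨δ, hδ, rfl⟩ := (vertical_iff hy).mp hv
  exact G.loopless e (by rw [hy, hx δ hδ]; exact Sym2.mk_isDiag_iff.mpr rfl)

theorem actE_eq_self_of_fixes_incident_edge {γ : Γ} (hγ : A.QuotHarmonic (Subgroup.zpowers γ))
    {x : G.V} (hx : A.actV γ x = x) {e : G.E} (he : x ∈ G.ends e) (hee : A.actE γ e = e)
    {f : G.E} (hf : x ∈ G.ends f) : A.actE γ f = f := by
  let := A.vertexAction
  let := A.edgeAction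
  have hΔx : ∀ δ ∈ Subgroup.zpowers γ, A.actV δ x = x := fun δ hδ =>
    Subgroup.zpowers_le.mpr (show γ ∈ MulAction.stabilizer Γ x from hx) hδ
  have hΔe : ∀ δ ∈ Subgroup.zpowers γ, A.actE δ e = e := fun δ hδ =>
    Subgroup.zpowers_le.mpr (show γ ∈ MulAction.stabilizer Γ e from hee) hδ
  have hxx : A.vrel (Subgroup.zpowers γ) x x := (A.vSetoid _).refl x
  have hcard := hγ x f e (not_vertical_of_forall_fixes hΔx hf) (not_vertical_of_forall_fixes hΔx he)
    ⟨x, hf, hxx⟩ ⟨x, he, hxx⟩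
  -- `e` is the only edge at `x` in its orbit, so by harmonicity the same holds for `f`
  have hsub_e : Subsingleton {e' // x ∈ G.ends e' ∧ A.erel (Subgroup.zpowers γ) e' e} :=
    ⟨fun ⟨a, _, δ, hδ, ha⟩ ⟨b, _, δ', hδ', hb⟩ => Subtype.ext <|
      ((A.actE δ).injective (ha.trans (hΔe δ hδ).symm)).trans
        ((A.actE δ').injective (hb.trans (hΔe δ' hδ').symm)).symm⟩
  have hsub_f : Subsingleton {e' // x ∈ G.ends e' ∧ A.erel (Subgroup.zpowers γ) e' f} := by
    rw [← Finite.card_le_one_iff_subsingleton, hcard]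
    exact Finite.card_le_one_iff_subsingleton.mpr hsub_e
  have hγf : x ∈ G.ends (A.actE γ f) ∧ A.erel (Subgroup.zpowers γ) (A.actE γ f) f :=
    ⟨hx ▸ (mem_ends_actE_iff γ).mpr hf, γ⁻¹, inv_mem (Subgroup.mem_zpowers γ), by simp⟩
  exact congrArg Subtype.val (@Subsingleton.elim _ hsub_f ⟨_, hγf⟩ ⟨f, hf, (A.eSetoid _).refl f⟩)

theorem eq_one_of_fixes_incident_edge {γ : Γ} (hγ : A.QuotHarmonic (Subgroup.zpowers γ))
    {x : G.V} (hx : A.actV γ x = x) {e : G.E} (he : x ∈ G.ends e) (hee : A.actE γ e = e) :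
    γ = 1 := by
  have hall : ∀ y, A.actV γ y = y ∧ ∃ f, y ∈ G.ends f ∧ A.actE γ f = f := by
    refine G.forall_of_edge_step (fun f y z hf ⟨hy, f', hf', hf'γ⟩ => ?_) ⟨hx, e, he, hee⟩
    have hfγ := actE_eq_self_of_fixes_incident_edge hγ hy hf' hf'γ (hf ▸ Sym2.mem_mk_left y z)
    have hends : s(A.actV γ y, A.actV γ z) = s(y, z) := by
      rw [← Sym2.map_mk, ← hf, ← A.ends_map, hfγ]
    rw [hy] at hends
    exact ⟨Sym2.congr_right.mp hends, f, hf ▸ Sym2.mem_mk_right y z, hfγ⟩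
  refine A.faithful γ (fun y => (hall y).1) fun f => ?_
  obtain ⟨y, z, hf⟩ := G.exists_ends_eq f
  obtain ⟨hy, f', hf', hf'γ⟩ := hall y
  exact actE_eq_self_of_fixes_incident_edge hγ hy hf' hf'γ (hf ▸ Sym2.mem_mk_left y z)

theorem eq_one_of_fixes_nonvertical (hA : A.ActsHarmonically) {γ : Γ} (hγ : γ ∈ Δ) {e : G.E}
    (he : ¬ A.Vertical Δ e) (hfix : A.actE γ e = e) : γ = 1 := by
  obtain ⟨x, y, hxy⟩ := G.exists_ends_eq e
  have hends : s(A.actV γ x, A.actV γ y) = s(x, y) := by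
    rw [← Sym2.map_mk, ← hxy, ← A.ends_map, hfix]
  rcases Sym2.eq_iff.mp hends with ⟨hx, -⟩ | ⟨hx, -⟩
  · exact eq_one_of_fixes_incident_edge (hA _).1 hx (hxy ▸ Sym2.mem_mk_left x y) hfix
  · exact absurd ((vertical_iff hxy).mpr ⟨γ, hγ, hx⟩) he

theorem stabOrder_eq_card_stabilizer [MulAction Γ G.V] (hV : ∀ (γ : Γ) x, γ • x = A.actV γ x)
    (x : G.V) : A.stabOrder Δ x = Nat.card (MulAction.stabilizer Δ x) :=
  Nat.card_congr <| Equiv.subtypeSubtypeEquivSubtypeInter (· ∈ Δ) _ |>.symm.trans <|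
    Equiv.subtypeEquivRight fun δ => by simp [Subgroup.smul_def, hV]

theorem r_pos (y : A.quotV Δ) : 0 < A.r Δ y := by
  have := A.finite
  have : Nonempty {γ // γ ∈ Δ ∧ A.actV γ y.out = y.out} := ⟨⟨1, Δ.one_mem, by simp⟩⟩
  exact Nat.card_pos

theorem vertMult_actV {γ : Γ} (hγ : γ ∈ Δ) (x : G.V) :
    A.vertMult Δ (A.actV γ x) = A.vertMult Δ x :=
  Nat.card_congr (Equiv.subtypeEquiv (A.actE γ) fun _ =>
    and_congr (mem_ends_actE_iff γ).symm (vertical_actE_iff hγ).symm).symm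

theorem card_V_eq_sum_card_div_r (Δ : Subgroup Γ) :
    (Nat.card G.V : ℚ) = ∑ y : A.quotV Δ, (Nat.card Δ / A.r Δ y : ℚ) := by
  let := A.vertexAction
  have := A.finite
  have := MulAction.sum_eq_sum_quotient_card_div_card_stabilizer (H := Δ) (A.vSetoid Δ)
    (fun _ _ => vrel_iff) (fun _ => (1 : ℚ)) fun _ _ => rfl
  simp only [Finset.sum_const, Finset.card_univ, nsmul_eq_mul, mul_one,
    Fintype.card_eq_nat_card] at this
  simp only [this, r, stabOrder_eq_card_stabilizer (A := A) (fun _ _ => rfl)]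

theorem card_nonvertical_eq_card_quotE_mul (hA : A.ActsHarmonically) (Δ : Subgroup Γ) :
    Nat.card {e // ¬ A.Vertical Δ e} = Nat.card (A.quotE Δ) * Nat.card Δ := by
  let := A.edgeAction
  have := A.finite
  let nonvertical : SubMulAction Δ G.E :=
    { carrier := {e | ¬ A.Vertical Δ e}
      smul_mem' := fun δ _ he => (vertical_actE_iff δ.2).not.mpr he }
  have hs : ∀ e f : nonvertical, A.erel Δ e f ↔ ∃ δ : Δ, δ • e = f := fun e f =>
    erel_iff.trans (exists_congr fun δ => (Subtype.ext_iff (a1 := δ • e) (a2 := f)).symm)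
  have hfree : ∀ (δ : Δ) (e : nonvertical), δ • e = e → δ = 1 := fun δ e he =>
    Subtype.ext (eq_one_of_fixes_nonvertical hA δ.2 e.2 congr(Subtype.val $he))
  exact MulAction.card_eq_card_quotient_mul_card_of_free (X := nonvertical)
    ((A.eSetoid Δ).comap Subtype.val) hs hfree

theorem stabOrder_dvd_vertMult (hA : A.ActsHarmonically) (x : G.V) :
    A.stabOrder Δ x ∣ A.vertMult Δ x := by
  let := A.vertexAction
  let := A.edgeAction
  have := A.finite
  let stab := MulAction.stabilizer Δ x
  let incidentVertical : SubMulAction stab G.E :=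
    { carrier := {e | x ∈ G.ends e ∧ A.Vertical Δ e}
      smul_mem' := fun σ e ⟨hx, hv⟩ =>
        ⟨σ.2.symm ▸ (mem_ends_actE_iff (σ : Γ)).mpr hx, (vertical_actE_iff σ.1.2).mpr hv⟩ }
  have hfree : ∀ (σ : stab) (e : incidentVertical), σ • e = e → σ = 1 := fun σ e he => by
    have hfix : A.actE σ e.1 = e.1 := congrArg Subtype.val he
    exact Subtype.ext (Subtype.ext (eq_one_of_fixes_incident_edge (hA _).1 σ.2 e.2.1 hfix))
  have hcard := MulAction.card_eq_card_quotient_mul_card_of_free (MulAction.orbitRel stab _)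
    (fun _ _ => by rw [Setoid.comm', MulAction.orbitRel_apply, MulAction.mem_orbit_iff]) hfree
  rw [stabOrder_eq_card_stabilizer (A := A) (fun _ _ => rfl)]
  exact Dvd.intro_left _ hcard.symm

theorem sum_vertMult_eq_card_mul_sum_w (hA : A.ActsHarmonically) (Δ : Subgroup Γ) :
    ∑ x, (A.vertMult Δ x : ℚ) = Nat.card Δ * ∑ y : A.quotV Δ, (A.w Δ y : ℚ) := by
  let := A.vertexAction
  have := A.finite
  rw [MulAction.sum_eq_sum_quotient_card_div_card_stabilizer (H := Δ) (A.vSetoid Δ)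
    (fun _ _ => vrel_iff) _ fun δ x => congrArg Nat.cast (vertMult_actV δ.2 x), Finset.mul_sum]
  refine Fintype.sum_congr _ _ fun y => ?_
  have hr : (A.r Δ y : ℚ) ≠ 0 := by exact_mod_cast (r_pos y).ne'
  have hrw : (A.vertMult Δ y.out : ℚ) = A.r Δ y * A.w Δ y := by
    exact_mod_cast (Nat.mul_div_cancel' (stabOrder_dvd_vertMult hA y.out)).symm
  rw [← stabOrder_eq_card_stabilizer (A := A) (fun _ _ => rfl)]
  change (Nat.card Δ / A.r Δ y : ℚ) * _ = _
  rw [hrw]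
  field_simp

theorem genus_sub_one_eq_card_mul (hA : A.ActsHarmonically) (Δ : Subgroup Γ) :
    (G.genus : ℚ) - 1 = Nat.card Δ * (A.quotGenus Δ - 1 + A.ram Δ / 2) := by
  have hV := card_V_eq_sum_card_div_r (A := A) Δ
  have hE : (Nat.card G.E : ℚ) =
      Nat.card {e // A.Vertical Δ e} + Nat.card {e // ¬ A.Vertical Δ e} := by
    exact_mod_cast (Nat.card_congr (Equiv.sumCompl _)).symm.trans Nat.card_sum
  have hEnv : (Nat.card {e // ¬ A.Vertical Δ e} : ℚ) = Nat.card (A.quotE Δ) * Nat.card Δ := by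
    exact_mod_cast card_nonvertical_eq_card_quotE_mul hA Δ
  have hEv : 2 * (Nat.card {e // A.Vertical Δ e} : ℚ) = Nat.card Δ * ∑ y, (A.w Δ y : ℚ) := by
    rw [← sum_vertMult_eq_card_mul_sum_w hA Δ]
    exact_mod_cast (G.sum_card_incident_eq_two_mul _).symm
  have hram : A.ram Δ =
      2 * Nat.card (A.quotV Δ) - 2 * ∑ y, (1 / A.r Δ y : ℚ) + ∑ y, (A.w Δ y : ℚ) := by
    rw [ram, finsum_eq_sum_of_fintype, Finset.sum_add_distrib, ← Finset.mul_sum,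
      Finset.sum_sub_distrib, Finset.sum_const, Finset.card_univ, Fintype.card_eq_nat_card]
    ring
  have hsum : ∑ y, (Nat.card Δ / A.r Δ y : ℚ) = Nat.card Δ * ∑ y, (1 / A.r Δ y : ℚ) := by
    simp only [Finset.mul_sum, mul_one_div]
  rw [Multigraph.genus, quotGenus, hram, Fintype.card_eq_nat_card, Fintype.card_eq_nat_card]
  push_cast
  linear_combination hE + hEnv + hEv / 2 - hV - hsum

end

def quotEnds (A : GraphAction Γ G) (Δ : Subgroup Γ) : A.quotE Δ → Sym2 (A.quotV Δ) :=
  Quotient.lift (fun e => (G.ends e.1).map (Quotient.mk _)) fun _ _ ⟨δ, hδ, h⟩ => by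
    rw [← h, A.ends_map, Sym2.map_map]
    exact congrArg (Sym2.map · _) (funext fun x => (mk_actV hδ x).symm)

def quotGraph (A : GraphAction Γ G) (Δ : Subgroup Γ) : SimpleGraph (A.quotV Δ) :=
  SimpleGraph.fromEdgeSet (Set.range (A.quotEnds Δ))

theorem quotGraph_connected (A : GraphAction Γ G) (Δ : Subgroup Γ) :
    (A.quotGraph Δ).Connected := by
  refine SimpleGraph.connected_iff _ |>.mpr
    ⟨fun a b => ?_, G.connected.nonempty.map (Quotient.mk _)⟩
  induction a, b using Quotient.inductionOn₂ with | h x y => ?_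
  refine G.forall_of_edge_step
    (P := fun z => (A.quotGraph Δ).Reachable (Quotient.mk _ x) (Quotient.mk _ z))
    (fun e a b he h => ?_) .rfl y
  by_cases hab : A.vrel Δ a b
  · rwa [← mk_eq_mk_iff.mpr hab]
  refine h.trans (SimpleGraph.Adj.reachable (SimpleGraph.fromEdgeSet_adj _ |>.mpr
    ⟨⟨Quotient.mk _ ⟨e, (vertical_iff he).not.mpr hab⟩, ?_⟩, mt mk_eq_mk_iff.mp hab⟩))
  simp [quotEnds, he]

theorem quotGenus_nonneg (A : GraphAction Γ G) (Δ : Subgroup Γ) : 0 ≤ A.quotGenus Δ := by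
  have hsub : (A.quotGraph Δ).edgeSet ⊆ Set.range (A.quotEnds Δ) := by
    simp only [quotGraph, SimpleGraph.edgeSet_fromEdgeSet, Set.sdiff_subset]
  have hedges : Nat.card (A.quotGraph Δ).edgeSet ≤ Nat.card (A.quotE Δ) :=
    (Nat.card_mono (Set.toFinite _) hsub).trans (Finite.card_range_le _)
  have := (A.quotGraph_connected Δ).card_vert_le_card_edgeSet_add_one
  rw [quotGenus]
  omega

theorem ram_avoidsHurwitzGaps (A : GraphAction Γ G) (Δ : Subgroup Γ) :
    AvoidsHurwitzGaps (A.ram Δ) := by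
  rw [ram, finsum_eq_sum_of_fintype]
  exact .sum _ fun _ _ => .local_term _ _

end GraphAction

/-- Hurwitz genus bound for graphs. If `Γ` acts harmonically on a
graph `G` of genus `g ≥ 2`, then `|Γ| ≤ 6(g − 1)`. -/
theorem hurwitz_genus_bound {Γ : Type} [Group Γ] {G : Multigraph}
    (A : GraphAction Γ G) (hA : A.ActsHarmonically) (g : ℤ) (hg : G.genus = g)
    (h2 : 2 ≤ g) :
    (Nat.card Γ : ℤ) ≤ 6 * (g - 1) := by
  have hRH := GraphAction.genus_sub_one_eq_card_mul hA ⊤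
  rw [Subgroup.card_top, hg] at hRH
  have hg₁ : (1 : ℚ) ≤ g - 1 := by
    have : (2 : ℚ) ≤ g := by exact_mod_cast h2
    linarith
  have hn : (0 : ℚ) ≤ Nat.card Γ := Nat.cast_nonneg _
  have hF := AvoidsHurwitzGaps.one_sixth_le (A.quotGenus_nonneg ⊤)
    (A.ram_avoidsHurwitzGaps ⊤) (pos_of_mul_pos_right (by linarith) hn)
  have : (Nat.card Γ : ℚ) ≤ 6 * (g - 1) := by
    rw [hRH]
    nlinarith
  exact_mod_cast this
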